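/- arXiv:2312.05570 — 3 statements merged into one kernel-verified Lean document; each statement's English description precedes it below -/
import Mathlib

section
/- The truncated variation is almost subadditive over time intervals: for any function x : [0,∞) → ℝ, any c ≥ 0 and any 0 ≤ s < t < u, TV^c(x,[s,u]) ≤ TV^c(x,[s,t]) + TV^c(x,[t,u]) + c. -/
open scoped ENNReal

/-- The truncated variation of `x` with truncation parameter `c` on `[s,t]`:
the supremum over finite partitions `s = u₀ ≤ u₁ ≤ ... ≤ uₙ = t` of
`Σᵢ max(|x(uᵢ₊₁) − x(uᵢ)| − c, 0)`. -/
noncomputable def truncVar (x : ℝ → ℝ) (c s t : ℝ) : ℝ≥0∞ :=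
  ⨆ (n : ℕ) (u : Fin (n + 1) → ℝ) (_ : Monotone u) (_ : u 0 = s)
    (_ : u (Fin.last n) = t),
    ∑ i : Fin n, ENNReal.ofReal (|x (u i.succ) - x (u i.castSucc)| - c)

/-!
Induct on the number of points of a partition of `[s,u]` and remove its last point `p`.
If `t ≤ p`, the induction hypothesis handles the partition of `[s,p]`, and its last increment
extends the partition of `[t,p]` to one of `[t,u]`. If `p < t`, the remaining points already
partition `[s,p]`, and the increment from `p` to `u` is split at `t` into an increment ending
the partition of `[s,t]` and one forming the partition `t ≤ u`; since each of the two truncated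
pieces has lost `c`, this split costs at most `c`.
-/

theorem Fin.monotone_snoc_iff {α : Type*} [Preorder α] {n : ℕ} {v : Fin (n + 1) → α} {b : α} :
    Monotone (Fin.snoc v b : Fin (n + 2) → α) ↔ Monotone v ∧ v (Fin.last n) ≤ b := by
  refine ⟨fun h => ⟨fun i j hij => ?_, ?_⟩, fun ⟨hv, hb⟩ => Fin.monotone_iff_le_succ.2 fun i => ?_⟩
  · simpa using h (Fin.castSucc_le_castSucc_iff.2 hij)
  · simpa using h (Fin.le_last (Fin.last n).castSucc)
  · induction i using Fin.lastCases with
    | last => rwa [Fin.succ_last, Fin.snoc_castSucc, Fin.snoc_last]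
    | cast i =>
      rw [Fin.succ_castSucc, Fin.snoc_castSucc, Fin.snoc_castSucc]
      exact hv (Fin.castSucc_le_succ i)

theorem ENNReal.ofReal_abs_sub_sub_le (a b m c : ℝ) :
    ENNReal.ofReal (|a - b| - c) ≤
      ENNReal.ofReal (|a - m| - c) + ENNReal.ofReal (|m - b| - c) + ENNReal.ofReal c :=
  calc ENNReal.ofReal (|a - b| - c)
      ≤ ENNReal.ofReal ((|a - m| - c) + ((|m - b| - c) + c)) :=
        ENNReal.ofReal_le_ofReal (by linarith [abs_sub_le a m b])
    _ ≤ ENNReal.ofReal (|a - m| - c) + (ENNReal.ofReal (|m - b| - c) + ENNReal.ofReal c) :=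
        ENNReal.ofReal_add_le.trans (by gcongr; exact ENNReal.ofReal_add_le)
    _ = _ := (add_assoc ..).symm

section TruncatedSums

variable (x : ℝ → ℝ) (c : ℝ)

noncomputable def truncSum {n : ℕ} (v : Fin (n + 1) → ℝ) : ℝ≥0∞ :=
  ∑ i : Fin n, ENNReal.ofReal (|x (v i.succ) - x (v i.castSucc)| - c)

theorem truncSum_snoc {n : ℕ} (v : Fin (n + 1) → ℝ) (b : ℝ) :
    truncSum x c (Fin.snoc v b : Fin (n + 2) → ℝ) =
      truncSum x c v + ENNReal.ofReal (|x b - x (v (Fin.last n))| - c) := by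
  simp only [truncSum, Fin.sum_univ_castSucc, Fin.succ_castSucc, Fin.snoc_castSucc, Fin.succ_last,
    Fin.snoc_last]

variable {x c}

theorem le_truncVar {n : ℕ} {v : Fin (n + 1) → ℝ} {s t : ℝ} (hv : Monotone v) (h0 : v 0 = s)
    (hl : v (Fin.last n) = t) : truncSum x c v ≤ truncVar x c s t :=
  le_iSup_of_le n <| le_iSup_of_le v <| le_iSup_of_le hv <| le_iSup_of_le h0 <|
    le_iSup_of_le hl le_rfl

theorem truncVar_le {s t : ℝ} {M : ℝ≥0∞}
    (h : ∀ n (v : Fin (n + 1) → ℝ), Monotone v → v 0 = s → v (Fin.last n) = t →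
      truncSum x c v ≤ M) :
    truncVar x c s t ≤ M :=
  iSup_le fun n => iSup_le fun v => iSup_le fun hv => iSup_le fun h0 => iSup_le fun hl =>
    h n v hv h0 hl

theorem truncVar_add_ofReal_le {a b b' : ℝ} (hab : a ≤ b) (hbb' : b ≤ b') :
    truncVar x c a b + ENNReal.ofReal (|x b' - x b| - c) ≤ truncVar x c a b' := by
  have extend : ∀ n (v : Fin (n + 1) → ℝ), Monotone v → v 0 = a → v (Fin.last n) = b →
      truncSum x c v + ENNReal.ofReal (|x b' - x b| - c) ≤ truncVar x c a b' :=
    fun n v hv h0 hl => by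
      subst hl
      rw [← truncSum_snoc]
      exact le_truncVar (Fin.monotone_snoc_iff.2 ⟨hv, hbb'⟩)
        ((Fin.snoc_castSucc (i := 0) ..).trans h0) (Fin.snoc_last ..)
  -- Needed to undo the truncated subtraction below, as `truncVar x c a b` may vanish.
  have he : ENNReal.ofReal (|x b' - x b| - c) ≤ truncVar x c a b' :=
    le_add_self.trans <| extend 1 (Fin.snoc (fun _ => a) b)
      (Fin.monotone_snoc_iff.2 ⟨monotone_const, hab⟩) rfl (Fin.snoc_last ..)
  calc truncVar x c a b + ENNReal.ofReal (|x b' - x b| - c)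
      ≤ truncVar x c a b' - ENNReal.ofReal (|x b' - x b| - c)
          + ENNReal.ofReal (|x b' - x b| - c) := by
        gcongr
        exact truncVar_le fun n v hv h0 hl =>
          ENNReal.le_sub_of_add_le_right ENNReal.ofReal_ne_top (extend n v hv h0 hl)
    _ = truncVar x c a b' := tsub_add_cancel_of_le he

theorem truncSum_le_truncVar_add_truncVar {n : ℕ} {v : Fin (n + 1) → ℝ} (hv : Monotone v)
    {t : ℝ} (ht : t ≤ v (Fin.last n)) :
    truncSum x c v ≤
      truncVar x c (v 0) t + truncVar x c t (v (Fin.last n)) + ENNReal.ofReal c := by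
  induction n generalizing t with
  | zero => simp [truncSum]
  | succ n ih =>
    obtain ⟨w, b, rfl⟩ : ∃ w b, v = Fin.snoc w b := ⟨Fin.init v, _, (Fin.snoc_init_self v).symm⟩
    obtain ⟨hw, hwb⟩ := Fin.monotone_snoc_iff.1 hv
    rw [Fin.snoc_last] at ht ⊢
    rw [truncSum_snoc,
      show (Fin.snoc w b : Fin (n + 2) → ℝ) 0 = w 0 from Fin.snoc_castSucc (i := 0) ..]
    set p := w (Fin.last n)
    by_cases htp : t ≤ p
    · calc truncSum x c w + ENNReal.ofReal (|x b - x p| - c)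
          ≤ truncVar x c (w 0) t + truncVar x c t p + ENNReal.ofReal c
            + ENNReal.ofReal (|x b - x p| - c) := by gcongr; exact ih hw htp
        _ = truncVar x c (w 0) t + (truncVar x c t p + ENNReal.ofReal (|x b - x p| - c))
            + ENNReal.ofReal c := by ring
        _ ≤ _ := by gcongr; exact truncVar_add_ofReal_le htp hwb
    · have hpt : p ≤ t := (not_le.1 htp).le
      calc truncSum x c w + ENNReal.ofReal (|x b - x p| - c)
          ≤ truncVar x c (w 0) p + (ENNReal.ofReal (|x b - x t| - c)
            + ENNReal.ofReal (|x t - x p| - c) + ENNReal.ofReal c) :=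
            add_le_add (le_truncVar hw rfl rfl) (ENNReal.ofReal_abs_sub_sub_le ..)
        _ = (truncVar x c (w 0) p + ENNReal.ofReal (|x t - x p| - c))
            + ENNReal.ofReal (|x b - x t| - c) + ENNReal.ofReal c := by ring
        _ ≤ _ := by
          gcongr
          · exact truncVar_add_ofReal_le (hw (Fin.zero_le _)) hpt
          · exact le_add_self.trans (truncVar_add_ofReal_le le_rfl ht)

end TruncatedSums

theorem truncVar_almost_subadditive_general (x : ℝ → ℝ) (c s t u : ℝ) (htu : t < u) :
    truncVar x c s u ≤ truncVar x c s t + truncVar x c t u + ENNReal.ofReal c :=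
  truncVar_le fun _ _ hv h0 hl => by
    subst h0 hl
    exact truncSum_le_truncVar_add_truncVar hv htu.le

/-- Superadditivity of the truncated variation over time intervals. -/
theorem truncVar_almost_subadditive (x : ℝ → ℝ) (c s t u : ℝ) (hc : 0 ≤ c)
    (hs : 0 ≤ s) (hst : s < t) (htu : t < u) :
    truncVar x c s u ≤ truncVar x c s t + truncVar x c t u + ENNReal.ofReal c :=
  truncVar_almost_subadditive_general x c s t u htu
end

section
/- For a regulated (i.e. possessing right- and left-limits everywhere) path x : [0,∞) → ℝ, a time interval [s,t], and c > 0, the truncated variation equals the integral over all levels y ∈ ℝ of the number of crossings of the interval [y − c/2, y + c/2] by x on [s,t]: TV^c(x,[s,t]) = ∫_ℝ n^{y,c}(x,[s,t]) dy. -/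
open scoped ENNReal
open Filter

/-- The number of downcrossings of the interval `[y - c/2, y + c/2]` by `x` on `[s,t]`:
the supremum of `n` such that there exist alternating times
`s ≤ ρ₀ ≤ σ₀ ≤ ρ₁ ≤ σ₁ ≤ ... ≤ t` with `x(ρᵢ) ≥ y + c/2` and `x(σᵢ) < y - c/2`. -/
noncomputable def downcross (x : ℝ → ℝ) (y c s t : ℝ) : ℝ≥0∞ :=
  ⨆ (n : ℕ) (_ : ∃ ρ σ : Fin n → ℝ,
      (∀ i, s ≤ ρ i ∧ ρ i ≤ σ i ∧ σ i ≤ t) ∧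
      (∀ i j : Fin n, i < j → σ i ≤ ρ j) ∧
      (∀ i, y + c / 2 ≤ x (ρ i)) ∧
      (∀ i, x (σ i) < y - c / 2)), (n : ℝ≥0∞)

/-- The number of upcrossings of `[y - c/2, y + c/2]` by `x` on `[s,t]`. -/
noncomputable def upcross (x : ℝ → ℝ) (y c s t : ℝ) : ℝ≥0∞ :=
  downcross (fun u => -x u) (-y) c s t

/-- The total number of crossings of `[y - c/2, y + c/2]` by `x` on `[s,t]`. -/
noncomputable def crossings (x : ℝ → ℝ) (y c s t : ℝ) : ℝ≥0∞ :=
  upcross x y c s t + downcross x y c s t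

/-- `x` is regulated: it possesses right- and left-limits at every point. -/
def Regulated (x : ℝ → ℝ) : Prop :=
  (∀ a : ℝ, ∃ l : ℝ, Tendsto x (nhdsWithin a (Set.Ioi a)) (nhds l)) ∧
  (∀ a : ℝ, ∃ l : ℝ, Tendsto x (nhdsWithin a (Set.Iio a)) (nhds l))


/-!
Each increment `x(u) → x(v)` of a partition contributes `(|x(v) - x(u)| - c)⁺`, which is the
measure of the levels `y` whose band `[y - c/2, y + c/2]` it crosses, and the increments crossing
a given band downwards (upwards) form a chain of interlaced crossing times. Hence `TV^c ≤ ∫ n`.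

For the converse, first sample `x` at finitely many times. Deleting a sample that lies between
its two neighbours, or the endpoints of a smallest step when that step is at most `c`, does not
decrease any crossing number and does not increase `TV^c`. What is left is a zigzag whose steps
all exceed `c`, and then every crossing of a band uses a different step crossing that band, so
`∫ n ≤ ∑ (|Δ| - c) ≤ TV^c`. For the path itself, the levels admitting a given crossing
configuration form an interval `(α, β]`; such unions are exhausted by countably many members up
to a countable set of levels (the Sorgenfrey line is hereditarily Lindelöf). So countably many
times carry the crossing numbers of almost every level, and monotone convergence along finite
sets of these times gives `∫ n ≤ TV^c`.
-/

open Set MeasureTheory Topology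
open scoped Interval

section Crossings

variable {ι κ : Type*} {a : ι → ℝ} {S T : Set ι} {y c : ℝ} {n : ℕ}

def IsDownCrossing [Preorder ι] (a : ι → ℝ) (y c : ℝ) (ρ σ : Fin n → ι) : Prop :=
  (∀ i, ρ i ≤ σ i) ∧ (∀ i j, i < j → σ i ≤ ρ j) ∧
    (∀ i, y + c / 2 ≤ a (ρ i)) ∧ (∀ i, a (σ i) < y - c / 2)

noncomputable def downcrossOn [Preorder ι] (a : ι → ℝ) (S : Set ι) (y c : ℝ) : ℝ≥0∞ :=
  ⨆ (n : ℕ) (_ : ∃ ρ σ : Fin n → ι, (∀ i, ρ i ∈ S ∧ σ i ∈ S) ∧ IsDownCrossing a y c ρ σ),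
    (n : ℝ≥0∞)

noncomputable def crossingsOn [Preorder ι] (a : ι → ℝ) (S : Set ι) (y c : ℝ) : ℝ≥0∞ :=
  downcrossOn (fun i => -a i) S (-y) c + downcrossOn a S y c

noncomputable def truncVarOn [Preorder ι] (a : ι → ℝ) (S : Set ι) (c : ℝ) : ℝ≥0∞ :=
  ⨆ (n : ℕ) (v : Fin (n + 1) → ι) (_ : Monotone v) (_ : ∀ i, v i ∈ S),
    ∑ i : Fin n, ENNReal.ofReal (|a (v i.succ) - a (v i.castSucc)| - c)

section Preorder

variable [Preorder ι]

theorem le_downcrossOn {ρ σ : Fin n → ι} (hS : ∀ i, ρ i ∈ S ∧ σ i ∈ S)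
    (h : IsDownCrossing a y c ρ σ) : (n : ℝ≥0∞) ≤ downcrossOn a S y c :=
  le_iSup₂_of_le n ⟨ρ, σ, hS, h⟩ le_rfl

theorem downcrossOn_mono (h : S ⊆ T) : downcrossOn a S y c ≤ downcrossOn a T y c :=
  iSup₂_le fun _ ⟨_, _, hS, hρσ⟩ => le_downcrossOn (fun i => ⟨h (hS i).1, h (hS i).2⟩) hρσ

theorem crossingsOn_mono (h : S ⊆ T) : crossingsOn a S y c ≤ crossingsOn a T y c :=
  add_le_add (downcrossOn_mono h) (downcrossOn_mono h)

theorem downcrossOn_le_of_monotoneOn [Preorder κ] {b : κ → ℝ} {S' : Set κ} {φ : ι → κ}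
    (hφ : MonotoneOn φ S) (hφS : MapsTo φ S S') (hb : ∀ p ∈ S, b (φ p) = a p) :
    downcrossOn a S y c ≤ downcrossOn b S' y c :=
  iSup₂_le fun _ ⟨ρ, σ, hS, hle, hint, hρ, hσ⟩ => le_downcrossOn (ρ := φ ∘ ρ) (σ := φ ∘ σ)
    (fun i => ⟨hφS (hS i).1, hφS (hS i).2⟩)
    ⟨fun i => hφ (hS i).1 (hS i).2 (hle i), fun i j hij => hφ (hS i).2 (hS j).1 (hint i j hij),
      fun i => (hb _ (hS i).1).symm ▸ hρ i, fun i => (hb _ (hS i).2).symm ▸ hσ i⟩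

theorem crossingsOn_le_of_monotoneOn [Preorder κ] {b : κ → ℝ} {S' : Set κ} {φ : ι → κ}
    (hφ : MonotoneOn φ S) (hφS : MapsTo φ S S') (hb : ∀ p ∈ S, b (φ p) = a p) :
    crossingsOn a S y c ≤ crossingsOn b S' y c :=
  add_le_add (downcrossOn_le_of_monotoneOn hφ hφS fun p hp => by rw [hb p hp])
    (downcrossOn_le_of_monotoneOn hφ hφS hb)

theorem downcrossOn_eq_zero (h : ∀ p ∈ S, ∀ q ∈ S, p ≤ q → a p - a q ≤ c) :
    downcrossOn a S y c = 0 := by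
  refine le_antisymm (iSup₂_le fun n ⟨ρ, σ, hS, hle, _, hρ, hσ⟩ => ?_) bot_le
  rcases n with _ | n
  · simp
  · have := h _ (hS 0).1 _ (hS 0).2 (hle 0)
    linarith [hρ 0, hσ 0]

theorem crossingsOn_eq_zero (h : ∀ p ∈ S, ∀ q ∈ S, p ≤ q → |a p - a q| ≤ c) :
    crossingsOn a S y c = 0 := by
  rw [crossingsOn, downcrossOn_eq_zero, downcrossOn_eq_zero, add_zero] <;>
    intro p hp q hq hpq <;> have := abs_le.1 (h p hp q hq hpq) <;> linarith [this.1, this.2]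

theorem downcrossOn_iUnion {F : ℕ → Set ι} (hF : Monotone F) :
    downcrossOn a (⋃ k, F k) y c = ⨆ k, downcrossOn a (F k) y c := by
  refine le_antisymm (iSup₂_le fun n ⟨ρ, σ, hS, h⟩ => ?_)
    (iSup_le fun k => downcrossOn_mono (subset_iUnion F k))
  choose kρ hkρ using fun i => mem_iUnion.1 (hS i).1
  choose kσ hkσ using fun i => mem_iUnion.1 (hS i).2
  exact le_iSup_of_le (Finset.univ.sup kρ ⊔ Finset.univ.sup kσ) <| le_downcrossOn
    (fun i => ⟨hF (le_sup_of_le_left (Finset.le_sup (Finset.mem_univ i))) (hkρ i),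
      hF (le_sup_of_le_right (Finset.le_sup (Finset.mem_univ i))) (hkσ i)⟩) h

theorem crossingsOn_iUnion {F : ℕ → Set ι} (hF : Monotone F) :
    crossingsOn a (⋃ k, F k) y c = ⨆ k, crossingsOn a (F k) y c := by
  simp only [crossingsOn, downcrossOn_iUnion hF]
  exact ENNReal.iSup_add_iSup_of_monotone (fun _ _ h => downcrossOn_mono (hF h))
    fun _ _ h => downcrossOn_mono (hF h)

theorem measurable_downcrossOn (hS : S.Countable) : Measurable fun y => downcrossOn a S y c := by
  classical
  have := hS.to_subtype
  refine Measurable.iSup fun n => ?_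
  have hset : MeasurableSet
      {y | ∃ ρ σ : Fin n → ι, (∀ i, ρ i ∈ S ∧ σ i ∈ S) ∧ IsDownCrossing a y c ρ σ} := by
    have : {y | ∃ ρ σ : Fin n → ι, (∀ i, ρ i ∈ S ∧ σ i ∈ S) ∧ IsDownCrossing a y c ρ σ} =
        ⋃ (ρ : Fin n → S) (σ : Fin n → S),
          {y | IsDownCrossing a y c (fun i => ρ i) (fun i => σ i)} := by
      ext y
      simp only [mem_iUnion, mem_ofPred_eq]
      constructor
      · rintro ⟨ρ, σ, hS, h⟩
        exact ⟨fun i => ⟨ρ i, (hS i).1⟩, fun i => ⟨σ i, (hS i).2⟩, h⟩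
      · rintro ⟨ρ, σ, h⟩
        exact ⟨_, _, fun i => ⟨(ρ i).2, (σ i).2⟩, h⟩
    rw [this]
    refine MeasurableSet.iUnion fun ρ => MeasurableSet.iUnion fun σ => ?_
    simp only [IsDownCrossing, ofPred_and, ofPred_forall]
    exact (MeasurableSet.iInter fun _ => .const _).inter
      ((MeasurableSet.iInter fun _ => .iInter fun _ => .iInter fun _ => .const _).inter
        ((MeasurableSet.iInter fun _ =>
            measurableSet_le (measurable_id.add_const _) measurable_const).inter
          (MeasurableSet.iInter fun _ =>
            measurableSet_lt measurable_const (measurable_id.sub_const _))))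
  simp_rw [iSup_eq_if]
  exact Measurable.ite hset measurable_const measurable_const

theorem measurable_crossingsOn (hS : S.Countable) : Measurable fun y => crossingsOn a S y c :=
  ((measurable_downcrossOn hS).comp measurable_neg).add (measurable_downcrossOn hS)

theorem le_truncVarOn {v : Fin (n + 1) → ι} (hv : Monotone v) (hvS : ∀ i, v i ∈ S) :
    ∑ i : Fin n, ENNReal.ofReal (|a (v i.succ) - a (v i.castSucc)| - c) ≤ truncVarOn a S c :=
  le_iSup₂_of_le n v <| le_iSup₂_of_le hv hvS le_rfl

theorem truncVarOn_comp_le [Preorder κ] {φ : κ → ι} {S' : Set κ} (hφ : MonotoneOn φ S')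
    (hφS : MapsTo φ S' S) : truncVarOn (a ∘ φ) S' c ≤ truncVarOn a S c :=
  iSup₂_le fun _ _ => iSup₂_le fun hv hvS =>
    le_truncVarOn (fun _ _ h => hφ (hvS _) (hvS _) (hv h)) fun i => hφS (hvS i)

theorem truncVarOn_mono (h : S ⊆ T) : truncVarOn a S c ≤ truncVarOn a T c :=
  truncVarOn_comp_le (φ := id) monotoneOn_id h

end Preorder

/-- `f` moves the upper and `g` the lower crossing times. Only times whose values are more than `c`
apart can be consecutive times of a crossing, so only their order has to be kept. -/
theorem downcrossOn_le_of_reroute [PartialOrder ι] [Preorder κ] {b : κ → ℝ} {S' : Set κ}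
    (hc : 0 ≤ c) (f g : ι → κ) (hfS : MapsTo f S S') (hgS : MapsTo g S S')
    (hf : ∀ p ∈ S, a p ≤ b (f p)) (hg : ∀ p ∈ S, b (g p) ≤ a p)
    (hfg : ∀ p ∈ S, ∀ q ∈ S, p < q → c < |a p - a q| → f p ≤ g q)
    (hgf : ∀ p ∈ S, ∀ q ∈ S, p < q → c < |a p - a q| → g p ≤ f q) :
    downcrossOn a S y c ≤ downcrossOn b S' y c := by
  refine iSup₂_le fun _ ⟨ρ, σ, hS, hle, hint, hρ, hσ⟩ => le_downcrossOn (ρ := f ∘ ρ) (σ := g ∘ σ)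
    (fun i => ⟨hfS (hS i).1, hgS (hS i).2⟩) ⟨fun i => ?_, fun i j hij => ?_,
      fun i => (hρ i).trans (hf _ (hS i).1), fun i => (hg _ (hS i).2).trans_lt (hσ i)⟩
  · have hgap : c < a (ρ i) - a (σ i) := by linarith [hρ i, hσ i]
    refine hfg _ (hS i).1 _ (hS i).2 ((hle i).lt_of_ne fun h => ?_) (hgap.trans_le (le_abs_self _))
    rw [h] at hgap
    linarith
  · have hgap : c < a (ρ j) - a (σ i) := by linarith [hρ j, hσ i]
    refine hgf _ (hS i).2 _ (hS j).1 ((hint i j hij).lt_of_ne fun h => ?_)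
      (hgap.trans_le (abs_sub_comm (a (σ i)) _ ▸ le_abs_self _))
    rw [h] at hgap
    linarith

theorem crossingsOn_le_of_reroute [PartialOrder ι] [Preorder κ] {b : κ → ℝ} {S' : Set κ}
    (hc : 0 ≤ c) (f g : ι → κ) (hfS : MapsTo f S S') (hgS : MapsTo g S S')
    (hf : ∀ p ∈ S, a p ≤ b (f p)) (hg : ∀ p ∈ S, b (g p) ≤ a p)
    (hfg : ∀ p ∈ S, ∀ q ∈ S, p < q → c < |a p - a q| → f p ≤ g q)
    (hgf : ∀ p ∈ S, ∀ q ∈ S, p < q → c < |a p - a q| → g p ≤ f q) :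
    crossingsOn a S y c ≤ crossingsOn b S' y c := by
  have habs (p q : ι) : |-a p - -a q| = |a p - a q| := by rw [neg_sub_neg, abs_sub_comm]
  refine add_le_add (downcrossOn_le_of_reroute hc g f hgS hfS (fun p hp => neg_le_neg (hg p hp))
    (fun p hp => neg_le_neg (hf p hp)) ?_ ?_)
    (downcrossOn_le_of_reroute hc f g hfS hgS hf hg hfg hgf)
  · simpa only [habs] using hgf
  · simpa only [habs] using hfg

end Crossings

section Bands

variable {ι : Type*} [Preorder ι] {a : ι → ℝ} {S : Set ι} {y c : ℝ} {n : ℕ}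

def downBand (p q c : ℝ) : Set ℝ := {y | y + c / 2 ≤ p ∧ q < y - c / 2}

theorem downBand_eq_Ioc (p q c : ℝ) : downBand p q c = Ioc (q + c / 2) (p - c / 2) := by
  ext y
  simp only [downBand, mem_ofPred_eq, mem_Ioc]
  constructor <;> rintro ⟨h₁, h₂⟩ <;> constructor <;> linarith

noncomputable def stepCrossings (p q c y : ℝ) : ℝ≥0∞ :=
  (downBand (-p) (-q) c).indicator 1 (-y) + (downBand p q c).indicator 1 y

theorem measurable_stepCrossings (p q c : ℝ) : Measurable (stepCrossings p q c) := by
  unfold stepCrossings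
  simp only [downBand_eq_Ioc]
  exact ((measurable_one.indicator measurableSet_Ioc).comp measurable_neg).add
    (measurable_one.indicator measurableSet_Ioc)

theorem lintegral_stepCrossings (hc : 0 ≤ c) (p q : ℝ) :
    ∫⁻ y, stepCrossings p q c y = ENNReal.ofReal (|q - p| - c) := by
  unfold stepCrossings
  simp only [downBand_eq_Ioc]
  rw [lintegral_add_left (f := fun y => (Ioc (-q + c / 2) (-p - c / 2)).indicator 1 (-y))
      ((measurable_one.indicator measurableSet_Ioc).comp measurable_neg),
    lintegral_neg_eq_self (fun y => (Ioc (-q + c / 2) (-p - c / 2)).indicator 1 y),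
    lintegral_indicator_one measurableSet_Ioc, lintegral_indicator_one measurableSet_Ioc,
    Real.volume_Ioc, Real.volume_Ioc]
  rcases abs_cases (q - p) with ⟨h, h'⟩ | ⟨h, h'⟩ <;> rw [h]
  · rw [ENNReal.ofReal_of_nonpos (by linarith : p - c / 2 - (q + c / 2) ≤ 0), add_zero]
    ring_nf
  · rw [ENNReal.ofReal_of_nonpos (by linarith : -p - c / 2 - (-q + c / 2) ≤ 0), zero_add]
    ring_nf

theorem sum_indicator_downBand_le_downcrossOn {u : Fin (n + 1) → ι} (hu : Monotone u)
    (huS : ∀ i, u i ∈ S) :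
    ∑ i : Fin n, (downBand (a (u i.castSucc)) (a (u i.succ)) c).indicator 1 y ≤
      downcrossOn a S y c := by
  classical
  set D := Finset.univ.filter fun i : Fin n => y ∈ downBand (a (u i.castSucc)) (a (u i.succ)) c
  have hD (j : Fin D.card) := Finset.mem_filter.1 (D.orderEmbOfFin_mem rfl j)
  simp only [indicator_apply, Pi.one_apply, Finset.sum_boole]
  exact le_downcrossOn (ρ := fun j => u (D.orderEmbOfFin rfl j).castSucc)
    (σ := fun j => u (D.orderEmbOfFin rfl j).succ) (fun j => ⟨huS _, huS _⟩)
    ⟨fun j => hu (Fin.castSucc_le_succ _),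
      fun i j hij => hu (Fin.succ_le_castSucc_iff.2 ((D.orderEmbOfFin rfl).strictMono hij)),
      fun j => (hD j).2.1, fun j => (hD j).2.2⟩

theorem truncVarOn_le_lintegral_crossingsOn (hc : 0 ≤ c) (a : ι → ℝ) (S : Set ι) :
    truncVarOn a S c ≤ ∫⁻ y, crossingsOn a S y c := by
  refine iSup₂_le fun n u => iSup₂_le fun hu huS => ?_
  calc ∑ i : Fin n, ENNReal.ofReal (|a (u i.succ) - a (u i.castSucc)| - c)
      = ∫⁻ y, ∑ i : Fin n, stepCrossings (a (u i.castSucc)) (a (u i.succ)) c y := by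
        rw [lintegral_finsetSum _ fun i _ => measurable_stepCrossings _ _ _]
        simp only [lintegral_stepCrossings hc]
    _ ≤ ∫⁻ y, crossingsOn a S y c := lintegral_mono fun y => by
        simp only [stepCrossings, Finset.sum_add_distrib]
        exact add_le_add (sum_indicator_downBand_le_downcrossOn (a := fun i => -a i) hu huS)
          (sum_indicator_downBand_le_downcrossOn hu huS)

end Bands

theorem mem_uIcc_of_notMem_uIcc {x y z : ℝ} (hy : y ∉ [[x, z]]) (h : |y - x| ≤ |z - y|) :
    x ∈ [[y, z]] := by
  simp only [mem_uIcc, not_or, not_and_or, not_le] at hy ⊢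
  rcases hy with ⟨h₁ | h₁, h₂ | h₂⟩ <;> rcases abs_cases (y - x) with ⟨h₃, h₃'⟩ | ⟨h₃, h₃'⟩ <;>
    rcases abs_cases (z - y) with ⟨h₄, h₄'⟩ | ⟨h₄, h₄'⟩ <;>
    first | (left; constructor <;> linarith) | (right; constructor <;> linarith)

theorem mem_uIcc_of_zigzag {w x y z : ℝ} (hx : x ∉ [[w, y]]) (hy : y ∉ [[x, z]])
    (hw : |y - x| ≤ |x - w|) (hz : |y - x| ≤ |z - y|) : x ∈ [[w, z]] ∧ y ∈ [[w, z]] := by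
  have h₁ := mem_uIcc_of_notMem_uIcc (uIcc_comm w y ▸ hx) (by rwa [abs_sub_comm, abs_sub_comm w])
  have h₂ := mem_uIcc_of_notMem_uIcc hy hz
  simp only [mem_uIcc, not_or, not_and_or, not_le] at hx h₁ h₂ ⊢
  constructor <;> rcases h₁ with h₁ | h₁ <;> rcases h₂ with h₂ | h₂ <;>
    rcases hx with ⟨h₃ | h₃, h₄ | h₄⟩ <;>
    first | (left; constructor <;> linarith) | (right; constructor <;> linarith)

section Sequences

variable {a : ℕ → ℝ} {m : ℕ} {y c : ℝ}

def skipBlock (K d k : ℕ) : ℕ := if k < K then k else k + d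

/-- Sends an index of `a` to an index of `a ∘ skipBlock K d`, the block `[K, K + d)` going
to `t`. -/
def collapseBlock (K d t j : ℕ) : ℕ := if j < K then j else if j < K + d then t else j - d

theorem skipBlock_mono (K d : ℕ) : Monotone (skipBlock K d) := fun p q h => by
  simp only [skipBlock]; split_ifs <;> omega

theorem mapsTo_skipBlock {K d : ℕ} (h : d ≤ m) :
    MapsTo (skipBlock K d) (Iic (m - d)) (Iic m) := fun k hk => by
  simp only [mem_Iic, skipBlock] at *; split_ifs <;> omega

theorem crossingsOn_le_skipBlock (hc : 0 ≤ c) {K d tf tg : ℕ} (hKm : K + d ≤ m + 1)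
    (htf : tf ≤ m - d) (htg : tg ≤ m - d)
    (hf : ∀ j, K ≤ j → j < K + d → a j ≤ a (skipBlock K d tf))
    (hg : ∀ j, K ≤ j → j < K + d → a (skipBlock K d tg) ≤ a j)
    (hord : ∀ p q, p < q → q ≤ m → c < |a p - a q| →
      collapseBlock K d tf p ≤ collapseBlock K d tg q ∧
        collapseBlock K d tg p ≤ collapseBlock K d tf q) :
    crossingsOn a (Iic m) y c ≤ crossingsOn (a ∘ skipBlock K d) (Iic (m - d)) y c := by
  have hout (t j : ℕ) (hj : ¬ (K ≤ j ∧ j < K + d)) : skipBlock K d (collapseBlock K d t j) = j := by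
    simp only [skipBlock, collapseBlock]; split_ifs <;> omega
  have hin (t j : ℕ) (h₁ : K ≤ j) (h₂ : j < K + d) : collapseBlock K d t j = t := by
    simp only [collapseBlock]; split_ifs <;> omega
  have hmaps (t : ℕ) (ht : t ≤ m - d) : MapsTo (collapseBlock K d t) (Iic m) (Iic (m - d)) :=
    fun j hj => by simp only [mem_Iic, collapseBlock] at *; split_ifs <;> omega
  refine crossingsOn_le_of_reroute hc _ _ (hmaps tf htf) (hmaps tg htg) (fun j _ => ?_)
    (fun j _ => ?_) (fun p _ q hq hpq hgap => (hord p q hpq hq hgap).1)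
    (fun p _ q hq hpq hgap => (hord p q hpq hq hgap).2)
  · by_cases hj : K ≤ j ∧ j < K + d
    · rw [Function.comp_apply, hin tf j hj.1 hj.2]; exact hf j hj.1 hj.2
    · rw [Function.comp_apply, hout tf j hj]
  · by_cases hj : K ≤ j ∧ j < K + d
    · rw [Function.comp_apply, hin tg j hj.1 hj.2]; exact hg j hj.1 hj.2
    · rw [Function.comp_apply, hout tg j hj]

theorem crossingsOn_le_skipBlock_interior (hc : 0 ≤ c) {K d : ℕ} (hK : 1 ≤ K) (hKm : K + d ≤ m)
    (hmem : ∀ j, K ≤ j → j < K + d → a j ∈ [[a (K - 1), a (K + d)]])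
    (hosc : ∀ p q, K ≤ p → p < q → q < K + d → |a p - a q| ≤ c) :
    crossingsOn a (Iic m) y c ≤ crossingsOn (a ∘ skipBlock K d) (Iic (m - d)) y c := by
  have hK₀ : skipBlock K d K = K + d := by simp [skipBlock]
  have hK₁ : skipBlock K d (K - 1) = K - 1 := by simp only [skipBlock]; split_ifs <;> omega
  refine crossingsOn_le_skipBlock hc (tf := if a (K - 1) ≤ a (K + d) then K else K - 1)
    (tg := if a (K + d) ≤ a (K - 1) then K else K - 1) (by omega) (by split_ifs <;> omega)
    (by split_ifs <;> omega) (fun j h₁ h₂ => ?_) (fun j h₁ h₂ => ?_) fun p q hpq _ hgap => ?_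
  · rcases mem_uIcc.1 (hmem j h₁ h₂) with h | h <;> split_ifs <;> simp only [hK₀, hK₁] <;>
      linarith
  · rcases mem_uIcc.1 (hmem j h₁ h₂) with h | h <;> split_ifs <;> simp only [hK₀, hK₁] <;>
      linarith
  · have : ¬ (K ≤ p ∧ q < K + d) := fun h => hgap.not_ge (hosc p q h.1 hpq h.2)
    simp only [collapseBlock]; split_ifs <;> omega

theorem crossingsOn_le_skipBlock_first (hc : 0 ≤ c) (hm : 2 ≤ m) (hmem : a 0 ∈ [[a 1, a 2]])
    (hsmall : |a 0 - a 1| ≤ c) :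
    crossingsOn a (Iic m) y c ≤ crossingsOn (a ∘ skipBlock 0 1) (Iic (m - 1)) y c := by
  refine crossingsOn_le_skipBlock hc (K := 0) (d := 1) (tf := if a 1 ≤ a 2 then 1 else 0)
    (tg := if a 2 ≤ a 1 then 1 else 0) (by omega) (by split_ifs <;> omega)
    (by split_ifs <;> omega) (fun j _ hj => ?_) (fun j _ hj => ?_) fun p q hpq _ hgap => ?_
  · obtain rfl : j = 0 := by omega
    rcases mem_uIcc.1 hmem with h | h <;> split_ifs <;> simp only [skipBlock] <;> norm_num <;>
      linarith
  · obtain rfl : j = 0 := by omega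
    rcases mem_uIcc.1 hmem with h | h <;> split_ifs <;> simp only [skipBlock] <;> norm_num <;>
      linarith
  · have : ¬ (p = 0 ∧ q = 1) := fun h => hgap.not_ge (by rwa [h.1, h.2])
    simp only [collapseBlock]; split_ifs <;> omega

theorem crossingsOn_le_skipBlock_last (hc : 0 ≤ c) (hm : 2 ≤ m)
    (hmem : a m ∈ [[a (m - 1), a (m - 2)]]) (hsmall : |a (m - 1) - a m| ≤ c) :
    crossingsOn a (Iic m) y c ≤ crossingsOn (a ∘ skipBlock m 1) (Iic (m - 1)) y c := by
  have hskip (t : ℕ) (ht : t < m) : skipBlock m 1 t = t := if_pos ht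
  refine crossingsOn_le_skipBlock hc (K := m) (d := 1)
    (tf := if a (m - 2) ≤ a (m - 1) then m - 1 else m - 2)
    (tg := if a (m - 1) ≤ a (m - 2) then m - 1 else m - 2) le_rfl (by split_ifs <;> omega)
    (by split_ifs <;> omega) (fun j hj₁ hj₂ => ?_) (fun j hj₁ hj₂ => ?_) fun p q hpq hq hgap => ?_
  · obtain rfl : j = m := by omega
    rcases mem_uIcc.1 hmem with h | h <;> split_ifs <;> rw [hskip _ (by omega)] <;> linarith
  · obtain rfl : j = m := by omega
    rcases mem_uIcc.1 hmem with h | h <;> split_ifs <;> rw [hskip _ (by omega)] <;> linarith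
  · have : ¬ (p = m - 1 ∧ q = m) := fun h => hgap.not_ge (by rwa [h.1, h.2])
    simp only [collapseBlock]; split_ifs <;> omega

theorem exists_mem_downBand_of_zigzag (hbig : ∀ k < m, c < |a (k + 1) - a k|)
    (halt : ∀ k, k + 2 ≤ m → a (k + 1) ∉ [[a k, a (k + 2)]]) {p q : ℕ} (hpq : p < q)
    (hqm : q ≤ m) (hp : y + c / 2 ≤ a p) (hq : a q < y - c / 2) :
    ∃ k, p ≤ k ∧ k < q ∧ y ∈ downBand (a k) (a (k + 1)) c := by
  induction hd : q - p using Nat.strong_induction_on generalizing p with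
  | _ d ih =>
  by_cases h₁ : a (p + 1) < y - c / 2
  · exact ⟨p, le_rfl, hpq, hp, h₁⟩
  have hp₁ : p + 1 < q := by
    by_contra h
    obtain rfl : q = p + 1 := by omega
    exact h₁ hq
  by_cases h₂ : y + c / 2 ≤ a (p + 1)
  · obtain ⟨k, hk, hkq, hky⟩ := ih (q - (p + 1)) (by omega) hp₁ h₂ rfl
    exact ⟨k, by omega, hkq, hky⟩
  -- `a (p + 1)` lies inside the band, so the step after this down step goes up by more than `c`
  have hup : a (p + 1) < a (p + 2) := by
    by_contra h
    exact halt p (by omega) (mem_uIcc.2 (Or.inr ⟨by linarith, by linarith⟩))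
  have hbig' := hbig (p + 1) (by omega)
  rw [abs_of_pos (by linarith : (0 : ℝ) < a (p + 1 + 1) - a (p + 1))] at hbig'
  have hp₂ : y + c / 2 ≤ a (p + 2) := by linarith
  have hp₂q : p + 2 < q := by
    by_contra h
    obtain rfl : q = p + 2 := by omega
    linarith
  obtain ⟨k, hk, hkq, hky⟩ := ih (q - (p + 2)) (by omega) hp₂q hp₂ rfl
  exact ⟨k, by omega, hkq, hky⟩

theorem downcrossOn_le_sum_indicator_of_zigzag (hc : 0 ≤ c)
    (hbig : ∀ k < m, c < |a (k + 1) - a k|)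
    (halt : ∀ k, k + 2 ≤ m → a (k + 1) ∉ [[a k, a (k + 2)]]) :
    downcrossOn a (Iic m) y c ≤
      ∑ k ∈ Finset.range m, (downBand (a k) (a (k + 1)) c).indicator 1 y := by
  classical
  refine iSup₂_le fun n ⟨ρ, σ, hS, hle, hint, hρ, hσ⟩ => ?_
  have hlt (i : Fin n) : ρ i < σ i :=
    (hle i).lt_of_ne fun h => by have := hρ i; have := hσ i; rw [h] at *; linarith
  choose k hρk hkσ hky using fun i =>
    exists_mem_downBand_of_zigzag hbig halt (hlt i) (hS i).2 (hρ i) (hσ i)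
  have hk : StrictMono k := fun i j hij => (hkσ i).trans_le ((hint i j hij).trans (hρk j))
  simp only [indicator_apply, Pi.one_apply, Finset.sum_boole, Nat.cast_le]
  calc n = (Finset.univ.image k).card := by rw [Finset.card_image_of_injective _ hk.injective]; simp
    _ ≤ _ := Finset.card_le_card fun j hj => by
        obtain ⟨i, -, rfl⟩ := Finset.mem_image.1 hj
        exact Finset.mem_filter.2 ⟨Finset.mem_range.2 ((hkσ i).trans_le (hS i).2), hky i⟩

theorem lintegral_crossingsOn_Iic_le_truncVarOn_of_zigzag (hc : 0 ≤ c)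
    (hbig : ∀ k < m, c < |a (k + 1) - a k|)
    (halt : ∀ k, k + 2 ≤ m → a (k + 1) ∉ [[a k, a (k + 2)]]) :
    ∫⁻ y, crossingsOn a (Iic m) y c ≤ truncVarOn a (Iic m) c := by
  have hbig' : ∀ k < m, c < |-a (k + 1) - -a k| := fun k hk => by
    rw [neg_sub_neg, abs_sub_comm]; exact hbig k hk
  have halt' : ∀ k, k + 2 ≤ m → -a (k + 1) ∉ [[-a k, -a (k + 2)]] := fun k hk h => by
    rw [← image_neg_uIcc, neg_injective.mem_set_image] at h
    exact halt k hk h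
  calc ∫⁻ y, crossingsOn a (Iic m) y c
      ≤ ∫⁻ y, ∑ k ∈ Finset.range m, stepCrossings (a k) (a (k + 1)) c y :=
        lintegral_mono fun y => by
          simp only [stepCrossings, Finset.sum_add_distrib]
          exact add_le_add (downcrossOn_le_sum_indicator_of_zigzag hc hbig' halt')
            (downcrossOn_le_sum_indicator_of_zigzag hc hbig halt)
    _ = ∑ k ∈ Finset.range m, ENNReal.ofReal (|a (k + 1) - a k| - c) := by
        rw [lintegral_finsetSum _ fun k _ => measurable_stepCrossings _ _ _]
        simp only [lintegral_stepCrossings hc]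
    _ ≤ truncVarOn a (Iic m) c := by
        have := le_truncVarOn (a := a) (c := c) (S := Iic m) (v := fun i : Fin (m + 1) => (i : ℕ))
          (fun i j h => h) (fun i => Nat.lt_succ_iff.1 i.2)
        simpa [Fin.sum_univ_eq_sum_range (fun k => ENNReal.ofReal (|a (k + 1) - a k| - c))]
          using this

theorem crossingsOn_Iic_one_eq_zero (hc : 0 ≤ c) (h : |a 1 - a 0| ≤ c) :
    crossingsOn a (Iic 1) y c = 0 :=
  crossingsOn_eq_zero fun p hp q hq _ => by
    simp only [mem_Iic] at hp hq
    rcases (by omega : p = q ∨ (p = 0 ∧ q = 1)) with rfl | ⟨rfl, rfl⟩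
    · simpa using hc
    · rwa [abs_sub_comm]

/-- A smallest step is at most `c`. By alternation and minimality its endpoints lie between their
outer neighbours, so they can be deleted (only the outer one at either end of the sequence). -/
theorem exists_crossingsOn_le_skipBlock (hc : 0 ≤ c) (hm : 2 ≤ m)
    (hturn : ∀ K, 1 ≤ K → K + 1 ≤ m → a K ∉ [[a (K - 1), a (K + 1)]])
    (hsmall : ∃ k < m, |a (k + 1) - a k| ≤ c) :
    ∃ K d, 0 < d ∧ d ≤ m ∧
      ∀ y, crossingsOn a (Iic m) y c ≤ crossingsOn (a ∘ skipBlock K d) (Iic (m - d)) y c := by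
  obtain ⟨k₀, hk₀m, hk₀c⟩ := hsmall
  obtain ⟨k, hkm, hmin⟩ := (Finset.range m).exists_min_image (fun k => |a (k + 1) - a k|)
    ⟨k₀, Finset.mem_range.2 hk₀m⟩
  rw [Finset.mem_range] at hkm
  replace hmin (j : ℕ) (hj : j < m) : |a (k + 1) - a k| ≤ |a (j + 1) - a j| :=
    hmin j (Finset.mem_range.2 hj)
  have hsmall : |a (k + 1) - a k| ≤ c := (hmin k₀ hk₀m).trans hk₀c
  rcases Nat.eq_zero_or_pos k with rfl | hk
  · refine ⟨0, 1, one_pos, by omega, fun y => crossingsOn_le_skipBlock_first hc hm ?_ ?_⟩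
    · exact mem_uIcc_of_notMem_uIcc (by simpa using hturn 1 le_rfl hm) (hmin 1 (by omega))
    · rwa [abs_sub_comm]
  have hw := hmin (k - 1) (by omega)
  rw [Nat.sub_add_cancel hk] at hw
  by_cases hkm' : k + 1 = m
  · obtain rfl := hkm'
    have hmem : a (k + 1) ∈ [[a k, a (k - 1)]] :=
      mem_uIcc_of_notMem_uIcc (uIcc_comm (a (k - 1)) _ ▸ hturn k hk le_rfl)
        (by rwa [abs_sub_comm (a k), abs_sub_comm (a (k - 1))])
    refine ⟨k + 1, 1, one_pos, by omega, fun y => crossingsOn_le_skipBlock_last hc hm ?_ ?_⟩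
    · simpa [show k + 1 - 2 = k - 1 by omega] using hmem
    · simpa [abs_sub_comm] using hsmall
  obtain ⟨h₁, h₂⟩ := mem_uIcc_of_zigzag (hturn k hk (by omega))
    (by simpa using hturn (k + 1) (by omega) (by omega)) hw (hmin (k + 1) (by omega))
  refine ⟨k, 2, two_pos, by omega, fun y => crossingsOn_le_skipBlock_interior hc hk (by omega)
    (fun j hj₁ hj₂ => ?_) fun p q hp hpq hq => ?_⟩
  · rcases (by omega : j = k ∨ j = k + 1) with rfl | rfl <;> assumption
  · obtain ⟨rfl, rfl⟩ : p = k ∧ q = k + 1 := by omega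
    rwa [abs_sub_comm]

theorem lintegral_crossingsOn_Iic_le_truncVarOn (hc : 0 ≤ c) (m : ℕ) (a : ℕ → ℝ) :
    ∫⁻ y, crossingsOn a (Iic m) y c ≤ truncVarOn a (Iic m) c := by
  induction m using Nat.strong_induction_on generalizing a with
  | _ m ih =>
  have reduce (K d : ℕ) (hd : 0 < d) (hdm : d ≤ m)
      (h : ∀ y, crossingsOn a (Iic m) y c ≤ crossingsOn (a ∘ skipBlock K d) (Iic (m - d)) y c) :
      ∫⁻ y, crossingsOn a (Iic m) y c ≤ truncVarOn a (Iic m) c :=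
    calc _ ≤ ∫⁻ y, crossingsOn (a ∘ skipBlock K d) (Iic (m - d)) y c := lintegral_mono h
      _ ≤ truncVarOn (a ∘ skipBlock K d) (Iic (m - d)) c := ih _ (by omega) _
      _ ≤ truncVarOn a (Iic m) c :=
        truncVarOn_comp_le ((skipBlock_mono K d).monotoneOn _) (mapsTo_skipBlock hdm)
  by_cases hturn : ∃ K, 1 ≤ K ∧ K + 1 ≤ m ∧ a K ∈ [[a (K - 1), a (K + 1)]]
  · obtain ⟨K, hK, hKm, hmem⟩ := hturn
    refine reduce K 1 one_pos (by omega) fun y => crossingsOn_le_skipBlock_interior hc hK hKm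
      (fun j h₁ h₂ => ?_) fun p q h₁ h₂ h₃ => by omega
    obtain rfl : j = K := by omega
    exact hmem
  push Not at hturn
  by_cases hbig : ∀ k < m, c < |a (k + 1) - a k|
  · refine lintegral_crossingsOn_Iic_le_truncVarOn_of_zigzag hc hbig fun k hk => ?_
    simpa using hturn (k + 1) (by omega) (by omega)
  push Not at hbig
  rcases lt_or_ge m 2 with hm | hm
  · obtain ⟨k, hk, hkc⟩ := hbig
    obtain rfl : m = 1 := by omega
    obtain rfl : k = 0 := by omega
    simp [crossingsOn_Iic_one_eq_zero hc hkc]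
  · obtain ⟨K, d, hd, hdm, h⟩ := exists_crossingsOn_le_skipBlock hc hm hturn hbig
    exact reduce K d hd hdm h

end Sequences

theorem exists_countable_iUnion_diff_countable {X α : Type*} [TopologicalSpace X] [LinearOrder X]
    [OrderTopology X] [SecondCountableTopology X] [NoMinOrder X] (L : α → Set X)
    (hL : ∀ i, ∀ y ∈ L i, L i ∈ 𝓝[≤] y) :
    ∃ J : Set α, J.Countable ∧ ((⋃ i, L i) \ ⋃ i ∈ J, L i).Countable := by
  obtain ⟨J, hJ, hU⟩ :=
    TopologicalSpace.isOpen_iUnion_countable (fun i => interior (L i)) fun i => isOpen_interior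
  -- every point of the difference is isolated from the left within it
  refine ⟨J, hJ, Countable.mono (fun y hy => mem_sep hy ?_)
    countable_setOfPred_isolated_left_within⟩
  obtain ⟨i, hi⟩ := mem_iUnion.1 hy.1
  obtain ⟨l, hl, hsub⟩ := mem_nhdsLE_iff_exists_Ioc_subset.1 (hL i y hi)
  have hIoo : Ioo l y ⊆ ⋃ j ∈ J, L j := fun z hz => by
    have : z ∈ ⋃ j, interior (L j) :=
      mem_iUnion.2 ⟨i, interior_maximal (Ioo_subset_Ioc_self.trans hsub) isOpen_Ioo hz⟩
    rw [← hU] at this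
    obtain ⟨j, hj, hz⟩ := mem_iUnion₂.1 this
    exact mem_iUnion₂.2 ⟨j, hj, interior_subset hz⟩
  rw [← empty_mem_iff_bot, mem_nhdsWithin]
  exact ⟨Ioi l, isOpen_Ioi, hl, fun z ⟨hz₁, hz₂, hz₃⟩ => hz₂.2 (hIoo ⟨hz₁, hz₃⟩)⟩

theorem Set.Countable.exists_monotone_finite {α : Type*} {T : Set α} (hT : T.Countable) :
    ∃ F : ℕ → Set α, Monotone F ∧ (∀ k, (F k).Finite) ∧ ⋃ k, F k = T := by
  rcases T.eq_empty_or_nonempty with rfl | hne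
  · exact ⟨fun _ => ∅, monotone_const, fun _ => finite_empty, iUnion_empty⟩
  obtain ⟨f, rfl⟩ := hT.exists_eq_range hne
  refine ⟨fun k => f '' Iio k, fun k l h => image_mono (Iio_subset_Iio h),
    fun k => (finite_Iio k).image f, ?_⟩
  ext p
  simp only [mem_iUnion, mem_image, mem_Iio, mem_range]
  exact ⟨fun ⟨_, j, _, hj⟩ => ⟨j, hj⟩, fun ⟨j, hj⟩ => ⟨j + 1, j, j.lt_succ_self, hj⟩⟩

section Limits

variable {ι : Type*} {a : ι → ℝ} {S : Set ι} {y c : ℝ} {n : ℕ}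

theorem setOf_isDownCrossing_mem_nhdsLE [Preorder ι] {ρ σ : Fin n → ι}
    (h : IsDownCrossing a y c ρ σ) : {y' | IsDownCrossing a y' c ρ σ} ∈ 𝓝[≤] y := by
  have hσ : {y' | ∀ i, a (σ i) < y' - c / 2} ∈ 𝓝 y := by
    refine IsOpen.mem_nhds ?_ h.2.2.2
    simp only [ofPred_forall]
    exact isOpen_iInter_of_finite fun i => isOpen_lt continuous_const (by fun_prop)
  filter_upwards [nhdsWithin_le_nhds hσ, self_mem_nhdsWithin] with y' h₁ h₂
  exact ⟨h.1, h.2.1, fun i => by linarith [h.2.2.1 i, mem_Iic.1 h₂], h₁⟩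

theorem exists_countable_downcrossOn_le [Preorder ι] (a : ι → ℝ) (S : Set ι) (c : ℝ) :
    ∃ T ⊆ S, T.Countable ∧ ∃ N : Set ℝ, N.Countable ∧
      ∀ y ∉ N, downcrossOn a S y c ≤ downcrossOn a T y c := by
  let L (n : ℕ) (κ : (Fin n → ι) × (Fin n → ι)) : Set ℝ :=
    {y | (∀ i, κ.1 i ∈ S ∧ κ.2 i ∈ S) ∧ IsDownCrossing a y c κ.1 κ.2}
  have hL (n : ℕ) (κ) : ∀ y ∈ L n κ, L n κ ∈ 𝓝[≤] y := fun y ⟨hS, h⟩ => by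
    filter_upwards [setOf_isDownCrossing_mem_nhdsLE h] with y' h' using ⟨hS, h'⟩
  choose J hJ hE using fun n => exists_countable_iUnion_diff_countable (L n) (hL n)
  refine ⟨S ∩ ⋃ n, ⋃ κ ∈ J n, range κ.1 ∪ range κ.2, inter_subset_left,
    (countable_iUnion fun n => (hJ n).biUnion fun κ _ =>
      ((finite_range _).union (finite_range _)).countable).mono inter_subset_right,
    ⋃ n, (⋃ κ, L n κ) \ ⋃ κ ∈ J n, L n κ, countable_iUnion hE, fun y hy => ?_⟩
  refine iSup₂_le fun n ⟨ρ, σ, hS, h⟩ => ?_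
  have : y ∈ ⋃ κ ∈ J n, L n κ := by
    by_contra hy'
    exact hy (mem_iUnion.2 ⟨n, mem_iUnion.2 ⟨(ρ, σ), hS, h⟩, hy'⟩)
  obtain ⟨κ, hκ, hS', h'⟩ := mem_iUnion₂.1 this
  have hT (p : ι) (hp : p ∈ range κ.1 ∪ range κ.2) (hpS : p ∈ S) :
      p ∈ S ∩ ⋃ n, ⋃ κ ∈ J n, range κ.1 ∪ range κ.2 :=
    ⟨hpS, mem_iUnion.2 ⟨n, mem_iUnion₂.2 ⟨κ, hκ, hp⟩⟩⟩
  exact le_downcrossOn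
    (fun i => ⟨hT _ (Or.inl ⟨i, rfl⟩) (hS' i).1, hT _ (Or.inr ⟨i, rfl⟩) (hS' i).2⟩) h'

variable [LinearOrder ι]

theorem lintegral_crossingsOn_le_truncVarOn_of_finite (hc : 0 ≤ c) (hS : S.Finite) :
    ∫⁻ y, crossingsOn a S y c ≤ truncVarOn a S c := by
  obtain ⟨F, rfl⟩ := hS.exists_finset_coe
  rcases F.eq_empty_or_nonempty with rfl | hF
  · simp [crossingsOn_eq_zero]
  obtain ⟨m, hm⟩ : ∃ m, F.card = m + 1 := ⟨F.card - 1, by have := hF.card_pos; omega⟩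
  set e := F.orderIsoOfFin hm
  let τ : ℕ → ι := fun k => e ⟨min k m, by omega⟩
  let φ : ι → ℕ := fun p => if h : p ∈ F then e.symm ⟨p, h⟩ else 0
  have hτφ (p : ι) (hp : p ∈ F) : τ (φ p) = p := by
    simp only [τ, φ, dif_pos hp]
    rw [show (⟨min (e.symm ⟨p, hp⟩ : ℕ) m, _⟩ : Fin (m + 1)) = e.symm ⟨p, hp⟩ by
      ext; have := (e.symm ⟨p, hp⟩).2; simp only; omega]
    simp
  calc ∫⁻ y, crossingsOn a F y c ≤ ∫⁻ y, crossingsOn (a ∘ τ) (Iic m) y c :=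
        lintegral_mono fun y => crossingsOn_le_of_monotoneOn (φ := φ)
          (fun p hp q hq hpq => by
            simpa [φ, dif_pos (Finset.mem_coe.1 hp), dif_pos (Finset.mem_coe.1 hq)] using
              e.symm.monotone (show (⟨p, hp⟩ : F) ≤ ⟨q, hq⟩ from hpq))
          (fun p hp => by
            simp only [φ, dif_pos (Finset.mem_coe.1 hp), mem_Iic]
            have := (e.symm ⟨p, hp⟩).2
            omega)
          fun p hp => by rw [Function.comp_apply, hτφ p hp]
    _ ≤ truncVarOn (a ∘ τ) (Iic m) c := lintegral_crossingsOn_Iic_le_truncVarOn hc m _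
    _ ≤ truncVarOn a F c := truncVarOn_comp_le
        (fun k _ l _ hkl => by simp only [τ]; exact e.monotone (by simp only [Fin.mk_le_mk]; omega))
        fun k _ => (e _).2

theorem lintegral_crossingsOn_le_truncVarOn (hc : 0 ≤ c) (a : ι → ℝ) (S : Set ι) :
    ∫⁻ y, crossingsOn a S y c ≤ truncVarOn a S c := by
  obtain ⟨T₁, hT₁S, hT₁, N₁, hN₁, h₁⟩ := exists_countable_downcrossOn_le a S c
  obtain ⟨T₂, hT₂S, hT₂, N₂, hN₂, h₂⟩ := exists_countable_downcrossOn_le (fun i => -a i) S c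
  obtain ⟨F, hF, hFfin, hFT⟩ := (hT₁.union hT₂).exists_monotone_finite
  have hae : ∀ᵐ y, crossingsOn a S y c ≤ ⨆ k, crossingsOn a (F k) y c := by
    filter_upwards [(hN₁.union (hN₂.preimage neg_injective)).ae_notMem volume] with y hy
    rw [← crossingsOn_iUnion hF, hFT]
    exact add_le_add ((h₂ (-y) fun h => hy (Or.inr h)).trans (downcrossOn_mono subset_union_right))
      ((h₁ y fun h => hy (Or.inl h)).trans (downcrossOn_mono subset_union_left))
  calc ∫⁻ y, crossingsOn a S y c ≤ ∫⁻ y, ⨆ k, crossingsOn a (F k) y c := lintegral_mono_ae hae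
    _ = ⨆ k, ∫⁻ y, crossingsOn a (F k) y c :=
        lintegral_iSup (fun k => measurable_crossingsOn (hFfin k).countable)
          fun k l h y => crossingsOn_mono (hF h)
    _ ≤ truncVarOn a S c := iSup_le fun k =>
        (lintegral_crossingsOn_le_truncVarOn_of_finite hc (hFfin k)).trans
          (truncVarOn_mono ((subset_iUnion F k).trans (hFT ▸ union_subset hT₁S hT₂S)))

theorem truncVarOn_eq_lintegral_crossingsOn (hc : 0 ≤ c) (a : ι → ℝ) (S : Set ι) :
    truncVarOn a S c = ∫⁻ y, crossingsOn a S y c :=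
  (truncVarOn_le_lintegral_crossingsOn hc a S).antisymm (lintegral_crossingsOn_le_truncVarOn hc a S)

end Limits

theorem Monotone.fin_snoc {α : Type*} [Preorder α] {n : ℕ} {f : Fin (n + 1) → α} {b : α}
    (hf : Monotone f) (hb : f (Fin.last n) ≤ b) : Monotone (Fin.snoc f b : Fin (n + 2) → α) := by
  intro i j hij
  induction j using Fin.lastCases with
  | last =>
    induction i using Fin.lastCases with
    | last => simp
    | cast i => simpa using (hf (Fin.le_last i)).trans hb
  | cast j =>
    induction i using Fin.lastCases with
    | last => exact absurd hij (Fin.castSucc_lt_last j).not_ge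
    | cast i => simpa using hf (by simpa using hij)

theorem truncVar_eq_truncVarOn (x : ℝ → ℝ) (c s t : ℝ) :
    truncVar x c s t = truncVarOn x (Icc s t) c := by
  refine le_antisymm (iSup₂_le fun n u => iSup₂_le fun hu hs => iSup_le fun ht =>
    le_truncVarOn hu fun i => ⟨hs ▸ hu (Fin.zero_le i), ht ▸ hu (Fin.le_last i)⟩)
    (iSup₂_le fun n v => iSup₂_le fun hv hvS => ?_)
  let u : Fin (n + 3) → ℝ := Fin.cons s (Fin.snoc v t)
  have hu : Monotone u := (hv.fin_snoc (hvS _).2).vecCons (by simpa using (hvS 0).1)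
  refine le_trans ?_ (le_iSup₂_of_le (n + 2) u <| le_iSup₂_of_le hu rfl <|
    le_iSup_of_le (by simp [u]) le_rfl)
  rw [Fin.sum_univ_succ]
  simp only [u, ← Fin.succ_castSucc, Fin.cons_succ]
  rw [Fin.sum_univ_castSucc]
  simp only [Fin.succ_castSucc, Fin.snoc_castSucc]
  exact le_add_left le_self_add

theorem downcross_eq_downcrossOn (x : ℝ → ℝ) (y c s t : ℝ) :
    downcross x y c s t = downcrossOn x (Icc s t) y c := by
  have key (n : ℕ) (ρ σ : Fin n → ℝ) : (∀ i, s ≤ ρ i ∧ ρ i ≤ σ i ∧ σ i ≤ t) ↔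
      (∀ i, ρ i ∈ Icc s t ∧ σ i ∈ Icc s t) ∧ ∀ i, ρ i ≤ σ i := by
    simp only [mem_Icc, ← forall_and]
    exact forall_congr' fun i => ⟨fun ⟨h₁, h₂, h₃⟩ => ⟨⟨⟨h₁, h₂.trans h₃⟩, h₁.trans h₂, h₃⟩, h₂⟩,
      fun ⟨⟨⟨h₁, _⟩, _, h₃⟩, h₂⟩ => ⟨h₁, h₂, h₃⟩⟩
  simp only [downcross, downcrossOn, IsDownCrossing, key, and_assoc]

theorem crossings_eq_crossingsOn (x : ℝ → ℝ) (y c s t : ℝ) :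
    crossings x y c s t = crossingsOn x (Icc s t) y c := by
  simp only [crossings, upcross, crossingsOn, downcross_eq_downcrossOn]

theorem truncVar_eq_lintegral_crossings_general (x : ℝ → ℝ)
    (s t c : ℝ) (hc : 0 < c) :
    truncVar x c s t = ∫⁻ y : ℝ, crossings x y c s t := by
  simp only [truncVar_eq_truncVarOn, crossings_eq_crossingsOn]
  exact truncVarOn_eq_lintegral_crossingsOn hc.le x (Icc s t)

/-- Generalized Banach Indicatrix Theorem: for a regulated path the truncated
variation equals the integral over all levels of the number of interval crossings. -/
theorem truncVar_eq_lintegral_crossings (x : ℝ → ℝ) (hx : Regulated x)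
    (s t c : ℝ) (hs : 0 ≤ s) (hst : s < t) (hc : 0 < c) :
    truncVar x c s t = ∫⁻ y : ℝ, crossings x y c s t :=
  truncVar_eq_lintegral_crossings_general x s t c hc
end

section
/- Let x : [0,∞) → ℝ be continuous, c > 0, r ∈ [0,c), and let τ₀ = 0, τ_{k+1} = inf{ t > τ_k : x(t) ∈ (cℤ + r) \ {x(τ_k)} } be the Lebesgue partition times of x for the grid cℤ + r, and k^{c,r}(t) = max{k : τ_k ≤ t}. Then Σ_{p∈ℤ} n^{pc + c/2 + r, c}(x,[0,t]) ≤ k^{c,r}(t), where n^{y,c}(x,[0,t]) is the number of crossings of the interval [y − c/2, y + c/2] by x on [0,t]. -/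
open scoped ENNReal
open Filter

open scoped Classical
open Set

/-- The grid `cℤ + r = {pc + r : p ∈ ℤ}`. -/
def grid (c r : ℝ) : Set ℝ := {y : ℝ | ∃ p : ℤ, y = p * c + r}

/-- Lebesgue partition times of `x` for the grid `cℤ + r`: `τ₀ = 0` and
`τ_{k+1} = inf{ s > τ_k : x(s) ∈ (cℤ + r) \ {x(τ_k)} }`, with `inf ∅ = ∞`. -/
noncomputable def lebTime (x : ℝ → ℝ) (c r : ℝ) : ℕ → ℝ≥0∞
  | 0 => 0
  | k + 1 => sInf {s : ℝ≥0∞ | lebTime x c r k < s ∧ s ≠ ⊤ ∧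
      x s.toReal ∈ grid c r ∧ x s.toReal ≠ x ((lebTime x c r k).toReal)}

/-- `k^{c,r}(t) = max{k : τ_k ≤ t}`. -/
noncomputable def lebCount (x : ℝ → ℝ) (c r t : ℝ) : ℝ≥0∞ :=
  ⨆ (k : ℕ) (_ : lebTime x c r k ≤ ENNReal.ofReal t), (k : ℝ≥0∞)

namespace LebAux

/-- The downcrossing witness property on `[0,t]`. -/
def Qd (x : ℝ → ℝ) (y c t : ℝ) (n : ℕ) : Prop :=
  ∃ ρ σ : Fin n → ℝ,
      (∀ i, (0:ℝ) ≤ ρ i ∧ ρ i ≤ σ i ∧ σ i ≤ t) ∧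
      (∀ i j : Fin n, i < j → σ i ≤ ρ j) ∧
      (∀ i, y + c / 2 ≤ x (ρ i)) ∧
      (∀ i, x (σ i) < y - c / 2)

lemma Qd_zero (x : ℝ → ℝ) (y c t : ℝ) : Qd x y c t 0 :=
  ⟨Fin.elim0, Fin.elim0, fun i => i.elim0, fun i => i.elim0, fun i => i.elim0,
    fun i => i.elim0⟩

lemma downcross_eq (x : ℝ → ℝ) (y c t : ℝ) :
    downcross x y c 0 t = ⨆ n : ℕ, ((Nat.findGreatest (Qd x y c t) n : ℕ) : ℝ≥0∞) := by
  have hdef : downcross x y c 0 t = ⨆ n : ℕ, ⨆ _ : Qd x y c t n, (n : ℝ≥0∞) := rfl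
  apply le_antisymm
  · rw [hdef]
    refine iSup_le fun n => iSup_le fun hn => le_iSup_of_le n ?_
    exact Nat.cast_le.2 (Nat.le_findGreatest le_rfl hn)
  · refine iSup_le fun n => ?_
    have hQ : Qd x y c t (Nat.findGreatest (Qd x y c t) n) :=
      Nat.findGreatest_spec (Nat.zero_le n) (Qd_zero x y c t)
    rw [hdef]
    refine le_iSup_of_le (Nat.findGreatest (Qd x y c t) n) ?_
    rw [iSup_pos hQ]

/-- Step lemma: a pair of grid hits with distinct values advances a Lebesgue time. -/
lemma step (x : ℝ → ℝ) (c r : ℝ) (j : ℕ) (a b : ℝ) (ha0 : 0 ≤ a) (hab : a ≤ b)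
    (hga : x a ∈ grid c r) (hgb : x b ∈ grid c r) (hne : x a ≠ x b)
    (hj : lebTime x c r j ≤ ENNReal.ofReal a) :
    lebTime x c r (j + 1) ≤ ENNReal.ofReal b := by
  have hb0 : 0 ≤ b := ha0.trans hab
  set T := lebTime x c r j with hT
  have hstep : lebTime x c r (j + 1) = sInf {s : ℝ≥0∞ | T < s ∧ s ≠ ⊤ ∧
      x s.toReal ∈ grid c r ∧ x s.toReal ≠ x T.toReal} := rfl
  by_cases h : x T.toReal = x b
  · have hxa : x T.toReal ≠ x a := by rw [h]; exact fun he => hne he.symm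
    have hTa : T < ENNReal.ofReal a := by
      rcases lt_or_eq_of_le hj with h' | h'
      · exact h'
      · exfalso; apply hxa; rw [h', ENNReal.toReal_ofReal ha0]
    have hmem : ENNReal.ofReal a ∈ {s : ℝ≥0∞ | T < s ∧ s ≠ ⊤ ∧
        x s.toReal ∈ grid c r ∧ x s.toReal ≠ x T.toReal} := by
      refine ⟨hTa, ENNReal.ofReal_ne_top, ?_, ?_⟩
      · rw [ENNReal.toReal_ofReal ha0]; exact hga
      · rw [ENNReal.toReal_ofReal ha0]; exact fun he => hxa he.symm
    calc lebTime x c r (j + 1) ≤ ENNReal.ofReal a := hstep ▸ sInf_le hmem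
      _ ≤ ENNReal.ofReal b := ENNReal.ofReal_le_ofReal hab
  · have hTb : T < ENNReal.ofReal b := by
      rcases lt_or_eq_of_le (hj.trans (ENNReal.ofReal_le_ofReal hab)) with h' | h'
      · exact h'
      · exfalso; apply h; rw [h', ENNReal.toReal_ofReal hb0]
    have hmem : ENNReal.ofReal b ∈ {s : ℝ≥0∞ | T < s ∧ s ≠ ⊤ ∧
        x s.toReal ∈ grid c r ∧ x s.toReal ≠ x T.toReal} := by
      refine ⟨hTb, ENNReal.ofReal_ne_top, ?_, ?_⟩
      · rw [ENNReal.toReal_ofReal hb0]; exact hgb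
      · rw [ENNReal.toReal_ofReal hb0]; exact fun he => h he.symm
    exact hstep ▸ sInf_le hmem

/-- Chain lemma over `ℕ`-indexed sorted events. -/
lemma chain' (x : ℝ → ℝ) (c r t : ℝ) (M : ℕ) (a b : ℕ → ℝ)
    (h1 : ∀ k, k < M → 0 ≤ a k) (h2 : ∀ k, k < M → a k ≤ b k) (h3 : ∀ k, k < M → b k ≤ t)
    (h4 : ∀ k, k < M → x (a k) ∈ grid c r) (h5 : ∀ k, k < M → x (b k) ∈ grid c r)
    (h6 : ∀ k, k < M → x (a k) ≠ x (b k)) (h7 : ∀ k, k + 1 < M → b k ≤ a (k + 1)) :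
    lebTime x c r M ≤ ENNReal.ofReal t := by
  have main : ∀ j, j < M → lebTime x c r (j + 1) ≤ ENNReal.ofReal (b j) := by
    intro j
    induction j with
    | zero =>
      intro h0
      exact step x c r 0 (a 0) (b 0) (h1 0 h0) (h2 0 h0) (h4 0 h0) (h5 0 h0) (h6 0 h0)
        (by simp [lebTime])
    | succ j ih =>
      intro hjM
      have hj : j < M := Nat.lt_of_succ_lt hjM
      have hkey : lebTime x c r (j + 1) ≤ ENNReal.ofReal (a (j + 1)) :=
        (ih hj).trans (ENNReal.ofReal_le_ofReal (h7 j hjM))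
      exact step x c r (j + 1) (a (j + 1)) (b (j + 1)) (h1 _ hjM) (h2 _ hjM) (h4 _ hjM)
        (h5 _ hjM) (h6 _ hjM) hkey
  match M, main, h3 with
  | 0, _, _ => simp [lebTime]
  | (m + 1), main, h3 =>
    exact (main m (Nat.lt_succ_self m)).trans
      (ENNReal.ofReal_le_ofReal (h3 m (Nat.lt_succ_self m)))

/-- Chain lemma over an arbitrary finite index type of pairwise non-crossing events. -/
lemma chain_fin (x : ℝ → ℝ) (c r t : ℝ) {ι : Type} [Fintype ι] (v w : ι → ℝ)
    (h0 : ∀ i, 0 ≤ v i) (hvw : ∀ i, v i ≤ w i) (hwt : ∀ i, w i ≤ t)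
    (hgv : ∀ i, x (v i) ∈ grid c r) (hgw : ∀ i, x (w i) ∈ grid c r)
    (hne : ∀ i, x (v i) ≠ x (w i))
    (hdisj : ∀ i j, i ≠ j → w i ≤ v j ∨ w j ≤ v i) :
    lebTime x c r (Fintype.card ι) ≤ ENNReal.ofReal t := by
  set n := Fintype.card ι with hn
  obtain e := (Fintype.equivFin ι).symm
  set f : Fin n → ℝ := fun k => v (e k) with hf
  set π := Tuple.sort f with hπ
  have hmono : Monotone (f ∘ π) := Tuple.monotone_sort f
  set a : ℕ → ℝ := fun k => if h : k < n then v (e (π ⟨k, h⟩)) else 0 with ha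
  set b : ℕ → ℝ := fun k => if h : k < n then w (e (π ⟨k, h⟩)) else 0 with hb
  apply chain' x c r t n a b
  · intro k hk; simp only [ha, dif_pos hk]; exact h0 _
  · intro k hk; simp only [ha, hb, dif_pos hk]; exact hvw _
  · intro k hk; simp only [hb, dif_pos hk]; exact hwt _
  · intro k hk; simp only [ha, dif_pos hk]; exact hgv _
  · intro k hk; simp only [hb, dif_pos hk]; exact hgw _
  · intro k hk; simp only [ha, hb, dif_pos hk]; exact hne _
  · intro k hk
    have hk' : k < n := Nat.lt_of_succ_lt hk
    simp only [ha, hb, dif_pos hk, dif_pos hk']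
    set i := e (π ⟨k, hk'⟩) with hi
    set j := e (π ⟨k + 1, hk⟩) with hj
    have hij : i ≠ j := by
      intro hcon
      have h1 : π ⟨k, hk'⟩ = π ⟨k + 1, hk⟩ := e.injective hcon
      have h2 : (⟨k, hk'⟩ : Fin n) = ⟨k + 1, hk⟩ := π.injective h1
      simp [Fin.ext_iff] at h2
    rcases hdisj i j hij with h | h
    · exact h
    · exfalso
      have hvv : v i ≤ v j := hmono (show (⟨k, hk'⟩ : Fin n) ≤ ⟨k + 1, hk⟩ by
        simp [Fin.le_def])
      have hlt : v j < w j := lt_of_le_of_ne (hvw j) (fun he => hne j (by rw [he]))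
      linarith [h]

/-- Extract from a crossing of `[A,B]` a canonical pair of hitting times with
grid-free interior. -/
lemma cross_extract (x : ℝ → ℝ) (hx : Continuous x) (A B ρ σ : ℝ) (hAB : A < B)
    (hρσ : ρ ≤ σ) (hB : B ≤ x ρ) (hA : x σ < A) :
    ∃ v w : ℝ, ρ ≤ v ∧ v ≤ w ∧ w ≤ σ ∧ x v = B ∧ x w = A ∧
      ∀ s, v < s → s < w → A < x s ∧ x s < B := by
  have hcx : ∀ u u' : ℝ, ContinuousOn x (Icc u u') := fun _ _ => hx.continuousOn
  have hAne : (Icc ρ σ ∩ x ⁻¹' {B}).Nonempty := by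
    have hmemB : B ∈ Icc (x σ) (x ρ) := ⟨by linarith, hB⟩
    obtain ⟨v₀, hv₀, hxv₀⟩ := intermediate_value_Icc' hρσ (hcx ρ σ) hmemB
    exact ⟨v₀, hv₀, hxv₀⟩
  have hAcp : IsCompact (Icc ρ σ ∩ x ⁻¹' {B}) :=
    isCompact_Icc.inter_right (isClosed_singleton.preimage hx)
  set v := sSup (Icc ρ σ ∩ x ⁻¹' {B}) with hv
  have hvmem : v ∈ Icc ρ σ ∩ x ⁻¹' {B} := hAcp.sSup_mem hAne
  obtain ⟨⟨hρv, hvσ⟩, hxv⟩ := hvmem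
  simp only [mem_preimage, mem_singleton_iff] at hxv
  have hBne : (Icc v σ ∩ x ⁻¹' {A}).Nonempty := by
    have hmemA : A ∈ Icc (x σ) (x v) := ⟨hA.le, by rw [hxv]; exact hAB.le⟩
    obtain ⟨w₀, hw₀, hxw₀⟩ := intermediate_value_Icc' hvσ (hcx v σ) hmemA
    exact ⟨w₀, hw₀, hxw₀⟩
  have hBcp : IsCompact (Icc v σ ∩ x ⁻¹' {A}) :=
    isCompact_Icc.inter_right (isClosed_singleton.preimage hx)
  set w := sInf (Icc v σ ∩ x ⁻¹' {A}) with hw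
  have hwmem : w ∈ Icc v σ ∩ x ⁻¹' {A} := hBcp.sInf_mem hBne
  obtain ⟨⟨hvw, hwσ⟩, hxw⟩ := hwmem
  simp only [mem_preimage, mem_singleton_iff] at hxw
  refine ⟨v, w, hρv, hvw, hwσ, hxv, hxw, ?_⟩
  intro s hvs hsw
  constructor
  · by_contra hcon
    push_neg at hcon
    have hmemA : A ∈ Icc (x s) (x v) := ⟨hcon, by rw [hxv]; exact hAB.le⟩
    obtain ⟨s', hs', hxs'⟩ := intermediate_value_Icc' hvs.le (hcx v s) hmemA
    have hs'B : s' ∈ Icc v σ ∩ x ⁻¹' {A} := ⟨⟨hs'.1, by linarith [hs'.2]⟩, hxs'⟩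
    have : w ≤ s' := csInf_le (hBcp.bddBelow) hs'B
    linarith [hs'.2]
  · by_contra hcon
    push_neg at hcon
    have hmemB : B ∈ Icc (x w) (x s) := ⟨by rw [hxw]; exact hAB.le, hcon⟩
    obtain ⟨s', hs', hxs'⟩ := intermediate_value_Icc' hsw.le (hcx s w) hmemB
    have hs'A : s' ∈ Icc ρ σ ∩ x ⁻¹' {B} :=
      ⟨⟨by linarith [hs'.1], by linarith [hs'.2]⟩, hxs'⟩
    have : s' ≤ v := le_csSup (hAcp.bddAbove) hs'A
    linarith [hs'.1]

lemma grid_not_between (c r : ℝ) (hc : 0 < c) (p : ℤ) (z : ℝ)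
    (h1 : p * c + r < z) (h2 : z < (p + 1) * c + r) : z ∉ grid c r := by
  rintro ⟨q, rfl⟩
  have h1' : (p : ℝ) < q := lt_of_mul_lt_mul_right (by linarith) hc.le
  have h2' : (q : ℝ) < p + 1 := lt_of_mul_lt_mul_right (by linarith) hc.le
  have hq1 : p < q := by exact_mod_cast h1'
  have hq2 : q < p + 1 := by
    exact_mod_cast (by push_cast; linarith : (q : ℝ) < ((p + 1 : ℤ) : ℝ))
  omega
/-- Main counting lemma. -/
lemma main_count (x : ℝ → ℝ) (hx : Continuous x) (c r t : ℝ) (hc : 0 < c)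
    (F : Finset ℤ) (nu nd : ℤ → ℕ)
    (hu : ∀ p ∈ F, Qd (fun u => -x u) (-((p : ℝ) * c + c / 2 + r)) c t (nu p))
    (hd : ∀ p ∈ F, Qd x ((p : ℝ) * c + c / 2 + r) c t (nd p)) :
    lebTime x c r (∑ p ∈ F, (nu p + nd p)) ≤ ENNReal.ofReal t := by
  classical
  choose ρu σu hu1 hu2 hu3 hu4 using hu
  choose ρd σd hd1 hd2 hd3 hd4 using hd
  have key : ∀ (p : ℤ) (hp : p ∈ F) (k : Fin (nu p) ⊕ Fin (nd p)), ∃ v w : ℝ,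
      0 ≤ v ∧ v ≤ w ∧ w ≤ t ∧
      x v ∈ grid c r ∧ x w ∈ grid c r ∧ x v ≠ x w ∧
      (∀ s, v < s → s < w → x s ∉ grid c r) ∧
      (match k with
       | Sum.inl k => ρu p hp k ≤ v ∧ w ≤ σu p hp k ∧
           x v = (p : ℝ) * c + r ∧ x w = ((p : ℝ) + 1) * c + r
       | Sum.inr k => ρd p hp k ≤ v ∧ w ≤ σd p hp k ∧
           x v = ((p : ℝ) + 1) * c + r ∧ x w = (p : ℝ) * c + r) := by
    intro p hp k
    have hgL : (p : ℝ) * c + r ∈ grid c r := ⟨p, rfl⟩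
    have hgU : ((p : ℝ) + 1) * c + r ∈ grid c r := ⟨p + 1, by push_cast; ring⟩
    cases k with
    | inl k =>
      obtain ⟨hv0, hvs, hst⟩ := hu1 p hp k
      obtain ⟨v, w, h1, h2, h3, h4, h5, h6⟩ :=
        cross_extract (fun u => -x u) hx.neg
          (-((p : ℝ) * c + c / 2 + r) - c / 2) (-((p : ℝ) * c + c / 2 + r) + c / 2)
          (ρu p hp k) (σu p hp k) (by linarith) hvs (hu3 p hp k) (hu4 p hp k)
      have h4' : -x v = -((p : ℝ) * c + c / 2 + r) + c / 2 := h4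
      have h5' : -x w = -((p : ℝ) * c + c / 2 + r) - c / 2 := h5
      have hxv : x v = (p : ℝ) * c + r := by linarith
      have hxw : x w = ((p : ℝ) + 1) * c + r := by linarith
      refine ⟨v, w, le_trans hv0 h1, h2, le_trans h3 hst, ?_, ?_, ?_, ?_, ?_⟩
      · rw [hxv]; exact hgL
      · rw [hxw]; exact hgU
      · rw [hxv, hxw]; intro hcon; linarith
      · intro s hs1 hs2
        obtain ⟨hA, hB⟩ := h6 s hs1 hs2
        have hA' : -((p : ℝ) * c + c / 2 + r) - c / 2 < -x s := hA
        have hB' : -x s < -((p : ℝ) * c + c / 2 + r) + c / 2 := hB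
        exact grid_not_between c r hc p (x s) (by linarith) (by linarith)
      · exact ⟨h1, h3, hxv, hxw⟩
    | inr k =>
      obtain ⟨hv0, hvs, hst⟩ := hd1 p hp k
      obtain ⟨v, w, h1, h2, h3, h4, h5, h6⟩ :=
        cross_extract x hx
          ((p : ℝ) * c + c / 2 + r - c / 2) ((p : ℝ) * c + c / 2 + r + c / 2)
          (ρd p hp k) (σd p hp k) (by linarith) hvs (hd3 p hp k) (hd4 p hp k)
      have hxv : x v = ((p : ℝ) + 1) * c + r := by rw [h4]; ring
      have hxw : x w = (p : ℝ) * c + r := by rw [h5]; ring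
      refine ⟨v, w, le_trans hv0 h1, h2, le_trans h3 hst, ?_, ?_, ?_, ?_, ?_⟩
      · rw [hxv]; exact hgU
      · rw [hxw]; exact hgL
      · rw [hxv, hxw]; intro hcon; linarith
      · intro s hs1 hs2
        obtain ⟨hA, hB⟩ := h6 s hs1 hs2
        exact grid_not_between c r hc p (x s) (by linarith) (by linarith)
      · exact ⟨h1, h3, hxv, hxw⟩
  choose vv ww k1 k2 k3 k4 k5 k6 k7 k8 using key
  let ι : Type := Σ p : {p : ℤ // p ∈ F}, (Fin (nu p.1) ⊕ Fin (nd p.1))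
  let V : ι → ℝ := fun i => vv i.1.1 i.1.2 i.2
  let W : ι → ℝ := fun i => ww i.1.1 i.1.2 i.2
  have hlt : ∀ i : ι, V i < W i := by
    intro i
    refine lt_of_le_of_ne (k2 _ _ _) fun he => k6 i.1.1 i.1.2 i.2 ?_
    exact congrArg x he
  have noncross : ∀ i j : ι, ¬(V i = V j ∧ W i = W j) → W i ≤ V j ∨ W j ≤ V i := by
    intro i j hne'
    rcases lt_trichotomy (V i) (V j) with h | h | h
    · left
      by_contra hcon
      push_neg at hcon
      exact k7 i.1.1 i.1.2 i.2 (V j) h hcon (k4 j.1.1 j.1.2 j.2)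
    · rcases lt_trichotomy (W i) (W j) with h2 | h2 | h2
      · exfalso
        have hVj : V j < W i := by rw [← h]; exact hlt i
        exact k7 j.1.1 j.1.2 j.2 (W i) hVj h2 (k5 i.1.1 i.1.2 i.2)
      · exact absurd ⟨h, h2⟩ hne'
      · exfalso
        have hVi : V i < W j := by rw [h]; exact hlt j
        exact k7 i.1.1 i.1.2 i.2 (W j) hVi h2 (k5 j.1.1 j.1.2 j.2)
    · right
      by_contra hcon
      push_neg at hcon
      exact k7 j.1.1 j.1.2 j.2 (V i) h hcon (k4 i.1.1 i.1.2 i.2)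
  have hdisj : ∀ i j : ι, i ≠ j → W i ≤ V j ∨ W j ≤ V i := by
    rintro ⟨⟨p, hp⟩, k⟩ ⟨⟨q, hq⟩, l⟩ hij
    by_cases hpq : p = q
    · subst hpq
      cases k with
      | inl k =>
        cases l with
        | inl l =>
          have hkl : k ≠ l := by rintro rfl; exact hij rfl
          have h8i := k8 p hp (Sum.inl k)
          have h8j := k8 p hp (Sum.inl l)
          rcases lt_or_gt_of_ne hkl with h | h
          · left
            calc W ⟨⟨p, hp⟩, Sum.inl k⟩ ≤ σu p hp k := h8i.2.1
              _ ≤ ρu p hp l := hu2 p hp k l h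
              _ ≤ V ⟨⟨p, hp⟩, Sum.inl l⟩ := h8j.1
          · right
            calc W ⟨⟨p, hp⟩, Sum.inl l⟩ ≤ σu p hp l := h8j.2.1
              _ ≤ ρu p hp k := hu2 p hp l k h
              _ ≤ V ⟨⟨p, hp⟩, Sum.inl k⟩ := h8i.1
        | inr l =>
          apply noncross
          rintro ⟨he1, he2⟩
          have h8i := k8 p hp (Sum.inl k)
          have h8j := k8 p hp (Sum.inr l)
          have hev : x (V ⟨⟨p, hp⟩, Sum.inl k⟩) = x (V ⟨⟨p, hp⟩, Sum.inr l⟩) := by rw [he1]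
          rw [h8i.2.2.1, h8j.2.2.1] at hev
          linarith
      | inr k =>
        cases l with
        | inl l =>
          apply noncross
          rintro ⟨he1, he2⟩
          have h8i := k8 p hp (Sum.inr k)
          have h8j := k8 p hp (Sum.inl l)
          have hev : x (V ⟨⟨p, hp⟩, Sum.inr k⟩) = x (V ⟨⟨p, hp⟩, Sum.inl l⟩) := by rw [he1]
          rw [h8i.2.2.1, h8j.2.2.1] at hev
          linarith
        | inr l =>
          have hkl : k ≠ l := by rintro rfl; exact hij rfl
          have h8i := k8 p hp (Sum.inr k)
          have h8j := k8 p hp (Sum.inr l)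
          rcases lt_or_gt_of_ne hkl with h | h
          · left
            calc W ⟨⟨p, hp⟩, Sum.inr k⟩ ≤ σd p hp k := h8i.2.1
              _ ≤ ρd p hp l := hd2 p hp k l h
              _ ≤ V ⟨⟨p, hp⟩, Sum.inr l⟩ := h8j.1
          · right
            calc W ⟨⟨p, hp⟩, Sum.inr l⟩ ≤ σd p hp l := h8j.2.1
              _ ≤ ρd p hp k := hd2 p hp l k h
              _ ≤ V ⟨⟨p, hp⟩, Sum.inr k⟩ := h8i.1
    · apply noncross
      rintro ⟨he1, he2⟩
      have hpq' : (p : ℝ) ≠ (q : ℝ) := fun hcon => hpq (by exact_mod_cast hcon)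
      have hev : x (V ⟨⟨p, hp⟩, k⟩) = x (V ⟨⟨q, hq⟩, l⟩) := by rw [he1]
      have hew : x (W ⟨⟨p, hp⟩, k⟩) = x (W ⟨⟨q, hq⟩, l⟩) := by rw [he2]
      have h8i := k8 p hp k
      have h8j := k8 q hq l
      cases k with
      | inl k =>
        cases l with
        | inl l =>
          rw [h8i.2.2.1, h8j.2.2.1] at hev
          refine hpq' ?_
          have hc' : (p : ℝ) * c = (q : ℝ) * c := by linarith
          exact mul_right_cancel₀ hc.ne' hc'
        | inr l =>
          rw [h8i.2.2.1, h8j.2.2.1] at hev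
          rw [h8i.2.2.2, h8j.2.2.2] at hew
          have e1 : ((q : ℝ) + 1) * c = (q : ℝ) * c + c := by ring
          have e2 : ((p : ℝ) + 1) * c = (p : ℝ) * c + c := by ring
          linarith
      | inr k =>
        cases l with
        | inl l =>
          rw [h8i.2.2.1, h8j.2.2.1] at hev
          rw [h8i.2.2.2, h8j.2.2.2] at hew
          have e1 : ((q : ℝ) + 1) * c = (q : ℝ) * c + c := by ring
          have e2 : ((p : ℝ) + 1) * c = (p : ℝ) * c + c := by ring
          linarith
        | inr l =>
          rw [h8i.2.2.1, h8j.2.2.1] at hev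
          refine hpq' ?_
          have hc' : (p : ℝ) * c = (q : ℝ) * c := by linarith
          exact mul_right_cancel₀ hc.ne' hc'
  have hcard : Fintype.card ι = ∑ p ∈ F, (nu p + nd p) := by
    show Fintype.card (Σ p : {p : ℤ // p ∈ F}, (Fin (nu p.1) ⊕ Fin (nd p.1)))
      = ∑ p ∈ F, (nu p + nd p)
    rw [Fintype.card_sigma]
    have h1 : ∀ p : {p : ℤ // p ∈ F},
        Fintype.card (Fin (nu p.1) ⊕ Fin (nd p.1)) = nu p.1 + nd p.1 := by
      intro p; simp
    rw [Finset.sum_congr rfl (fun p _ => h1 p)]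
    exact Finset.sum_attach F (fun p => nu p + nd p)
  rw [← hcard]
  exact chain_fin x c r t V W (fun i => k1 _ _ _) (fun i => k2 _ _ _) (fun i => k3 _ _ _)
    (fun i => k4 _ _ _) (fun i => k5 _ _ _) (fun i => k6 _ _ _) hdisj


end LebAux

/-- The total number of crossings of the grid-centered intervals is at most the
number of Lebesgue partition times in `[0,t]`. -/
theorem tsum_crossings_le_lebCount (x : ℝ → ℝ) (hx : Continuous x)
    (c r t : ℝ) (hc : 0 < c) (hr0 : 0 ≤ r) (hrc : r < c) (ht : 0 ≤ t) :
    ∑' p : ℤ, crossings x (p * c + c / 2 + r) c 0 t ≤ lebCount x c r t := by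
  classical
  set Gu : ℤ → ℕ → ℕ := fun p n =>
    Nat.findGreatest (LebAux.Qd (fun u => -x u) (-((p : ℝ) * c + c / 2 + r)) c t) n with hGu
  set Gd : ℤ → ℕ → ℕ := fun p n =>
    Nat.findGreatest (LebAux.Qd x ((p : ℝ) * c + c / 2 + r) c t) n with hGd
  have hGu_mono : ∀ p : ℤ, Monotone fun n => ((Gu p n : ℕ) : ℝ≥0∞) := by
    intro p m n hmn
    exact Nat.cast_le.2 (Nat.findGreatest_mono (fun _ h => h) hmn)
  have hGd_mono : ∀ p : ℤ, Monotone fun n => ((Gd p n : ℕ) : ℝ≥0∞) := by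
    intro p m n hmn
    exact Nat.cast_le.2 (Nat.findGreatest_mono (fun _ h => h) hmn)
  have hcross : ∀ p : ℤ, crossings x ((p : ℝ) * c + c / 2 + r) c 0 t
      = ⨆ n : ℕ, (((Gu p n : ℕ) : ℝ≥0∞) + ((Gd p n : ℕ) : ℝ≥0∞)) := by
    intro p
    have h1 : upcross x ((p : ℝ) * c + c / 2 + r) c 0 t
        = downcross (fun u => -x u) (-((p : ℝ) * c + c / 2 + r)) c 0 t := rfl
    rw [crossings, h1, LebAux.downcross_eq, LebAux.downcross_eq]
    exact ENNReal.iSup_add_iSup_of_monotone (hGu_mono p) (hGd_mono p)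
  rw [ENNReal.tsum_eq_iSup_sum]
  refine iSup_le fun F => ?_
  calc ∑ p ∈ F, crossings x ((p : ℝ) * c + c / 2 + r) c 0 t
      = ∑ p ∈ F, ⨆ n : ℕ, (((Gu p n : ℕ) : ℝ≥0∞) + ((Gd p n : ℕ) : ℝ≥0∞)) :=
        Finset.sum_congr rfl fun p _ => hcross p
    _ = ⨆ n : ℕ, ∑ p ∈ F, (((Gu p n : ℕ) : ℝ≥0∞) + ((Gd p n : ℕ) : ℝ≥0∞)) :=
        ENNReal.finsetSum_iSup_of_monotone fun p m n hmn =>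
          add_le_add (hGu_mono p hmn) (hGd_mono p hmn)
    _ ≤ lebCount x c r t := by
        refine iSup_le fun n => ?_
        have hsum : ∑ p ∈ F, (((Gu p n : ℕ) : ℝ≥0∞) + ((Gd p n : ℕ) : ℝ≥0∞))
            = ((∑ p ∈ F, (Gu p n + Gd p n) : ℕ) : ℝ≥0∞) := by
          push_cast; rfl
        rw [hsum]
        have hN : lebTime x c r (∑ p ∈ F, (Gu p n + Gd p n)) ≤ ENNReal.ofReal t := by
          refine LebAux.main_count x hx c r t hc F (fun p => Gu p n) (fun p => Gd p n)
            (fun p _ => ?_) (fun p _ => ?_)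
          · exact Nat.findGreatest_spec (Nat.zero_le n) (LebAux.Qd_zero _ _ _ _)
          · exact Nat.findGreatest_spec (Nat.zero_le n) (LebAux.Qd_zero _ _ _ _)
        rw [lebCount]
        refine le_iSup_of_le (∑ p ∈ F, (Gu p n + Gd p n)) ?_
        rw [iSup_pos hN]
end
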